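/- arXiv:1506.02820 — 4 statements merged into one kernel-verified Lean document; each statement's English description precedes it below -/
import Mathlib

section
/- Let γ be an element of order n' in a finite field K, let f, m be integers with gcd(n', m) = 1, and let δ ≥ 2 and ν ≥ 0 be integers. Let E be a nonempty subset of {0,…,n'−1} and let e_j ∈ K be nonzero for each j ∈ E. For each t ∈ {0,…,ν} define the syndrome polynomial S^⟨t⟩(X) = Σ_{i=0}^{δ−2} ( Σ_{j∈E} e_j γ^{(f+im+t)j} ) X^i, the error-locator polynomial Λ(X) = Π_{j∈E} (1 − X γ^{jm}), and the error-evaluator polynomial Ω^⟨t⟩(X) = Σ_{j∈E} e_j γ^{(f+t)j} Π_{i∈E, i≠j} (1 − X γ^{im}). Then for every t ∈ {0,…,ν}: deg Λ = |E|, deg Ω^⟨t⟩ ≤ |E| − 1, and Λ(X)·S^⟨t⟩(X) ≡ Ω^⟨t⟩(X) modulo X^{δ−1}. -/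
open Polynomial

/-- **Key equations for decoding up to Bound II.**  Over a finite field `K` containing
an element `γ` of order `n'` (`gcd(n', m) = 1`), with burst-error support
`E ⊆ {0,…,n'-1}` (nonempty) and nonzero error values `e_j` for `j ∈ E`, define for each
`t ∈ {0,…,ν}` the syndrome polynomial `S^⟨t⟩`, the error-locator `Λ` and the
error-evaluator `Ω^⟨t⟩`.  Then `deg Λ = |E|`, `deg Ω^⟨t⟩ ≤ |E| - 1` and
`Λ · S^⟨t⟩ ≡ Ω^⟨t⟩ (mod X^{δ-1})` for every `t ∈ {0,…,ν}`. -/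
theorem keyEquation_boundII
    {K : Type*} [Field K] [Fintype K]
    (n' : ℕ) (γ : Kˣ) (hγ : orderOf γ = n')
    (f m : ℤ) (hm : Int.gcd (n' : ℤ) m = 1)
    (δ ν : ℕ) (hδ : 2 ≤ δ)
    (E : Finset ℕ) (hE : E.Nonempty) (hEsub : ∀ j ∈ E, j < n')
    (e : ℕ → K) (he : ∀ j ∈ E, e j ≠ 0) :
    ∀ t ≤ ν,
      letI Λ : K[X] := ∏ j ∈ E, (1 - X * C ((γ ^ ((j : ℤ) * m) : Kˣ) : K))
      letI S : K[X] := ∑ i ∈ Finset.range (δ - 1),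
        C (∑ j ∈ E, e j * ((γ ^ ((f + (i : ℤ) * m + (t : ℤ)) * (j : ℤ)) : Kˣ) : K)) * X ^ i
      letI Ω : K[X] := ∑ j ∈ E,
        C (e j * ((γ ^ ((f + (t : ℤ)) * (j : ℤ)) : Kˣ) : K)) *
          ∏ i ∈ E.erase j, (1 - X * C ((γ ^ ((i : ℤ) * m) : Kˣ) : K))
      Λ.natDegree = E.card ∧ Ω.natDegree ≤ E.card - 1 ∧
        ∀ i < δ - 1, (Λ * S).coeff i = Ω.coeff i := by
  intro t ht

  set c : ℕ → K := fun j => ((γ ^ ((j : ℤ) * m) : Kˣ) : K) with hcdef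
  set a : ℕ → K := fun j => e j * ((γ ^ ((f + (t : ℤ)) * (j : ℤ)) : Kˣ) : K) with hadef
  have hc0 : ∀ j, c j ≠ 0 := fun j => Units.ne_zero _
  have hfac : ∀ j : ℕ, (1 - X * C (c j)).natDegree = 1 := by
    intro j
    have h1 : (1 - X * C (c j)) = C (-(c j)) * X + C 1 := by
      simp [map_neg]; ring
    rw [h1, natDegree_linear (neg_ne_zero.2 (hc0 j))]
  have hfacne : ∀ j : ℕ, (1 - X * C (c j)) ≠ 0 := by
    intro j h
    have := hfac j
    rw [h] at this
    simp at this
  refine ⟨?_, ?_, ?_⟩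
  · rw [Polynomial.natDegree_prod _ _ (fun j _ => hfacne j)]
    simp only [hfac]
    simp
  · refine Polynomial.natDegree_sum_le_of_forall_le _ _ (fun j hj => ?_)
    calc (C (a j) * ∏ i ∈ E.erase j, (1 - X * C (c i))).natDegree
        ≤ (C (a j)).natDegree + (∏ i ∈ E.erase j, (1 - X * C (c i))).natDegree :=
          natDegree_mul_le
      _ ≤ 0 + (E.erase j).card := by
          gcongr
          · simp
          · rw [Polynomial.natDegree_prod _ _ (fun i _ => hfacne i)]
            simp only [hfac]
            simp
      _ ≤ E.card - 1 := by rw [Finset.card_erase_of_mem hj]; simp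
  · -- main identity
    intro i hi
    have key : (∏ j ∈ E, (1 - X * C (c j))) *
        (∑ i ∈ Finset.range (δ - 1),
          C (∑ j ∈ E, e j * ((γ ^ ((f + (i : ℤ) * m + (t : ℤ)) * (j : ℤ)) : Kˣ) : K)) * X ^ i)
        = (∑ j ∈ E, C (a j) * ∏ i ∈ E.erase j, (1 - X * C (c i)))
          - (∑ j ∈ E, C (a j * c j ^ (δ - 1)) * ∏ i ∈ E.erase j, (1 - X * C (c i)))
            * X ^ (δ - 1) := by
      have hS : (∑ i ∈ Finset.range (δ - 1),
          C (∑ j ∈ E, e j * ((γ ^ ((f + (i : ℤ) * m + (t : ℤ)) * (j : ℤ)) : Kˣ) : K)) * X ^ i)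
          = ∑ j ∈ E, C (a j) * ∑ i ∈ Finset.range (δ - 1), (C (c j) * X) ^ i := by
        simp only [map_sum, Finset.sum_mul]
        rw [Finset.sum_comm]
        refine Finset.sum_congr rfl (fun j hj => ?_)
        rw [Finset.mul_sum]
        refine Finset.sum_congr rfl (fun i hi => ?_)
        · 
          have hexp : ((f + (i : ℤ) * m + (t : ℤ)) * (j : ℤ))
              = (f + (t : ℤ)) * (j : ℤ) + ((j : ℤ) * m) * (i : ℤ) := by ring
          have hval : (((γ ^ ((f + (i:ℤ) * m + (t:ℤ)) * (j:ℤ)) : Kˣ)) : K)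
              = ((γ ^ ((f + (t:ℤ)) * (j:ℤ)) : Kˣ) : K) * (c j) ^ i := by
            have hval' : γ ^ ((f + (i:ℤ) * m + (t:ℤ)) * (j:ℤ))
                = γ ^ ((f + (t:ℤ)) * (j:ℤ)) * (γ ^ ((j:ℤ) * m)) ^ i := by
              rw [hexp, ← zpow_natCast (γ ^ ((j:ℤ) * m)) i, ← zpow_mul, ← zpow_add]
            rw [hval', Units.val_mul, Units.val_pow_eq_pow_val]
          rw [hval]
          simp only [hadef, C_mul, C_pow]
          ring
      rw [hS, Finset.mul_sum, Finset.sum_mul, ← Finset.sum_sub_distrib]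
      refine Finset.sum_congr rfl (fun j hj => ?_)
      rw [← Finset.mul_prod_erase _ _ hj]
      have hgeom : (1 - C (c j) * X) * ∑ i ∈ Finset.range (δ - 1), (C (c j) * X) ^ i
          = 1 - (C (c j) * X) ^ (δ - 1) := by
        have := geom_sum_mul (C (c j) * X) (δ - 1)
        linear_combination -this
      calc (1 - X * C (c j)) * (∏ i ∈ E.erase j, (1 - X * C (c i))) *
            (C (a j) * ∑ i ∈ Finset.range (δ - 1), (C (c j) * X) ^ i)
          = C (a j) * (∏ i ∈ E.erase j, (1 - X * C (c i))) *
            ((1 - C (c j) * X) * ∑ i ∈ Finset.range (δ - 1), (C (c j) * X) ^ i) := by ring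
        _ = C (a j) * (∏ i ∈ E.erase j, (1 - X * C (c i))) *
            (1 - (C (c j) * X) ^ (δ - 1)) := by rw [hgeom]
        _ = _ := by
            simp only [C_mul, C_pow, mul_pow]
            ring
    rw [key, Polynomial.coeff_sub, Polynomial.coeff_mul_X_pow',
      if_neg (by omega), sub_zero]
end

section
/- Let C be a repeated-root cyclic code over F_q (q a power of the prime p) of length n = p^s·n' with gcd(n', p) = 1 and generator polynomial g, and let γ be an element of order n' in an extension field of F_q. Suppose there are integers f, m ≠ 0, δ ≥ 2 and ν ≥ 0 with gcd(n', m) = 1 such that γ^{f+im+j} is a root of g of multiplicity at least p^s for every i = 0,…,δ−2 and j = 0,…,ν. Then any two distinct codewords of C differ in at least δ + ν of the n' consecutive length-p^s blocks; consequently, every pattern of at most ⌊(δ+ν−1)/2⌋ p^s-phased burst errors is uniquely correctable, i.e., for every word r ∈ F_q^n there is at most one codeword c ∈ C such that r and c differ in at most ⌊(δ+ν−1)/2⌋ of the n' blocks. -/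
open Polynomial Module

section AuxiliaryLemmas

variable {K : Type*} [Field K]

lemma aux_linIndep {ι : Type*} [Fintype ι] (x : ι → K) (hx : Function.Injective x)
    (y : ι → K) (hy : ∀ j, y j ≠ 0) (r : ℕ) (hr : r ≤ Fintype.card ι) :
    LinearIndependent K (fun (i : Fin r) (j : ι) => y j * x j ^ (i : ℕ)) := by
  rcases Nat.eq_zero_or_pos r with rfl | hr0
  · exact linearIndependent_empty_type
  rw [Fintype.linearIndependent_iff]
  intro g hg
  set P : K[X] := ∑ i : Fin r, C (g i) * X ^ (i : ℕ) with hP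
  have hev : ∀ j : ι, P.eval (x j) = 0 := by
    intro j
    have h1 := congrFun hg j
    simp only [Finset.sum_apply, Pi.smul_apply, smul_eq_mul, Pi.zero_apply] at h1
    have h2 : y j * ∑ i : Fin r, g i * x j ^ (i : ℕ) = 0 := by
      rw [Finset.mul_sum, ← h1]
      exact Finset.sum_congr rfl fun i _ => by ring
    have h3 : ∑ i : Fin r, g i * x j ^ (i : ℕ) = 0 :=
      (mul_eq_zero.1 h2).resolve_left (hy j)
    simpa [P, eval_finset_sum] using h3
  have hdeg : P.natDegree < Fintype.card ι := by
    have : P.natDegree ≤ r - 1 := by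
      apply Polynomial.natDegree_sum_le_of_forall_le
      intro i _
      calc (C (g i) * X ^ (i : ℕ)).natDegree ≤ (i : ℕ) := natDegree_C_mul_X_pow_le _ _
        _ ≤ r - 1 := by omega
    omega
  have hP0 : P = 0 := P.eq_zero_of_natDegree_lt_card_of_eval_eq_zero hx hev hdeg
  intro i
  have := congrArg (fun q : K[X] => q.coeff (i : ℕ)) hP0
  simp only [hP, finset_sum_coeff, coeff_C_mul, coeff_X_pow, coeff_zero] at this
  rwa [Finset.sum_eq_single i (fun b _ hb => by
      simp [Fin.val_eq_val, hb.symm]) (by simp), if_pos rfl, mul_one] at this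

lemma aux_toDual {ι : Type*} [Fintype ι] [DecidableEq ι] (u v : ι → K) :
    (Pi.basisFun K ι).toDual u v = ∑ j, v j * u j := by
  conv_lhs => rw [← (Pi.basisFun K ι).sum_repr v]
  rw [map_sum]
  refine Finset.sum_congr rfl fun j _ => ?_
  rw [map_smul, Basis.toDual_apply_left, Pi.basisFun_repr, Pi.basisFun_repr, smul_eq_mul]

lemma aux_dim {ι : Type*} [Fintype ι] [DecidableEq ι] {r t : ℕ}
    (A : Fin r → ι → K) (B : Fin t → ι → K)
    (hA : LinearIndependent K A) (hB : LinearIndependent K B)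
    (horth : ∀ i i', ∑ j, A i j * B i' j = 0) : r + t ≤ Fintype.card ι := by
  set bb := Pi.basisFun K ι
  set e := bb.toDualEquiv
  set Φ : Subspace K (Module.Dual K (ι → K)) :=
    Submodule.span K (Set.range (fun i => e (A i))) with hΦ
  have hAe : LinearIndependent K (fun i => e (A i)) := hA.map' e.toLinearMap e.ker
  have hrank : finrank K Φ = r := by
    rw [hΦ, finrank_span_eq_card hAe, Fintype.card_fin]
  have hBmem : ∀ i', B i' ∈ Φ.dualCoannihilator := by
    intro i'
    rw [Submodule.mem_dualCoannihilator]
    intro φ hφ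
    induction hφ using Submodule.span_induction with
    | mem φ hφ =>
        obtain ⟨i, rfl⟩ := hφ
        show bb.toDual (A i) (B i') = 0
        rw [aux_toDual]
        rw [← horth i i']
        exact Finset.sum_congr rfl fun j _ => mul_comm _ _
    | zero => rfl
    | add φ ψ _ _ h1 h2 => simp [h1, h2]
    | smul c φ _ h1 => simp [h1]
  have hB' : LinearIndependent K
      (fun i' => (⟨B i', hBmem i'⟩ : Φ.dualCoannihilator)) := by
    apply LinearIndependent.of_comp Φ.dualCoannihilator.subtype
    exact hB
  have ht : t ≤ finrank K Φ.dualCoannihilator := by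
    simpa using hB'.fintype_card_le_finrank
  have := Subspace.finrank_add_finrank_dualCoannihilator_eq Φ
  rw [hrank] at this
  have hcard : finrank K (ι → K) = Fintype.card ι := Module.finrank_pi K
  omega

lemma ht_core (n' : ℕ) (hn' : 0 < n') (μ : Kˣ) (hμ : orderOf μ = n')
    (f m : ℤ) (hmn' : Int.gcd (n' : ℤ) m = 1) (δ ν : ℕ) (hδ : 2 ≤ δ)
    (b : ℕ → K)
    (heq : ∀ i < δ - 1, ∀ j' ≤ ν,
      ∑ j ∈ Finset.range n', b j * ((μ ^ (f + (i : ℤ) * m + (j' : ℤ)) : Kˣ) : K) ^ j = 0)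
    (hb : ∃ j < n', b j ≠ 0) :
    δ + ν ≤ {j | j < n' ∧ b j ≠ 0}.ncard := by
  classical
  set S : Finset ℕ := (Finset.range n').filter (fun j => b j ≠ 0) with hS
  have hset : {j | j < n' ∧ b j ≠ 0} = ↑S := by
    ext j; simp [hS]
  rw [hset, Set.ncard_coe_finset]
  by_contra hcon
  push_neg at hcon
  set w := S.card with hw
  have hw1 : 1 ≤ w := by
    obtain ⟨j, hj1, hj2⟩ := hb
    have : j ∈ S := by simp [hS, hj1, hj2]
    exact Finset.card_pos.mpr ⟨j, this⟩
  have hwlt : w ≤ δ + ν - 1 := by omega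
  have hcards : Fintype.card ↥S = w := Fintype.card_coe S
  -- basic facts
  have hmemS : ∀ j : ↥S, (j : ℕ) < n' ∧ b j ≠ 0 := by
    intro j
    have := j.2
    simp only [hS, Finset.mem_filter, Finset.mem_range] at this
    exact this
  have hdvd_iff : ∀ a : ℤ, μ ^ a = 1 ↔ (n' : ℤ) ∣ a := by
    intro a
    rw [← hμ]
    exact (orderOf_dvd_iff_zpow_eq_one).symm
  -- injectivity of j ↦ μ^j on S
  have hinj1 : Function.Injective (fun j : ↥S => ((μ ^ (j : ℕ) : Kˣ) : K)) := by
    intro j k hjk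
    have hu : (μ ^ (j : ℕ) : Kˣ) = μ ^ (k : ℕ) := Units.ext hjk
    have := (pow_eq_pow_iff_modEq.mp hu)
    rw [hμ] at this
    have hj := (hmemS j).1; have hk := (hmemS k).1
    have : (j : ℕ) = (k : ℕ) := by
      have := this.eq_of_lt_of_lt hj hk
      exact this
    exact Subtype.ext this
  -- injectivity of j ↦ (μ^j)^m on S
  have hinj2 : Function.Injective (fun j : ↥S => (((μ ^ (j : ℕ) : Kˣ) ^ m : Kˣ) : K)) := by
    intro j k hjk
    have hu : (μ ^ (j : ℕ) : Kˣ) ^ m = (μ ^ (k : ℕ) : Kˣ) ^ m := Units.ext hjk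
    have h1 : μ ^ (((j : ℕ) : ℤ) * m) = μ ^ (((k : ℕ) : ℤ) * m) := by
      rw [zpow_mul, zpow_mul, zpow_natCast, zpow_natCast]; exact hu
    have h2 : μ ^ ((((j : ℕ) : ℤ) - ((k : ℕ) : ℤ)) * m) = 1 := by
      rw [sub_mul, zpow_sub, h1, mul_inv_cancel]
    have h3 : (n' : ℤ) ∣ (((j : ℕ) : ℤ) - ((k : ℕ) : ℤ)) * m := (hdvd_iff _).mp h2
    have h4 : (n' : ℤ) ∣ (((j : ℕ) : ℤ) - ((k : ℕ) : ℤ)) :=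
      (Int.isCoprime_iff_gcd_eq_one.mpr hmn').dvd_of_dvd_mul_right h3
    have hj := (hmemS j).1; have hk := (hmemS k).1
    have h5 : ((j : ℕ) : ℤ) - ((k : ℕ) : ℤ) = 0 := by
      refine Int.eq_zero_of_dvd_of_natAbs_lt_natAbs h4 ?_
      simp only [Int.natAbs_natCast]
      omega
    have : (j : ℕ) = (k : ℕ) := by omega
    exact Subtype.ext this
  -- the vectors
  set y : ↥S → K := fun j => b j * (((μ ^ (j : ℕ) : Kˣ) ^ f : Kˣ) : K) with hy
  have hy0 : ∀ j, y j ≠ 0 := fun j =>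
    mul_ne_zero (hmemS j).2 (Units.ne_zero _)
  set Avec : Fin (min (δ - 1) w) → ↥S → K :=
    fun i j => y j * (((μ ^ (j : ℕ) : Kˣ) ^ m : Kˣ) : K) ^ (i : ℕ) with hAvec
  set Bvec : Fin (min (ν + 1) w) → ↥S → K :=
    fun i' j => (1 : K) * ((μ ^ (j : ℕ) : Kˣ) : K) ^ (i' : ℕ) with hBvec
  have hA : LinearIndependent K Avec :=
    aux_linIndep _ hinj2 y hy0 _ (by rw [hcards]; omega)
  have hB : LinearIndependent K Bvec :=
    aux_linIndep _ hinj1 (fun _ => (1 : K)) (fun _ => one_ne_zero) _ (by rw [hcards]; omega)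
  have horth : ∀ i i', ∑ j, Avec i j * Bvec i' j = 0 := by
    intro i i'
    have hiδ : (i : ℕ) < δ - 1 := by have := i.2; omega
    have hi'ν : (i' : ℕ) ≤ ν := by have := i'.2; omega
    have hkey := heq (i : ℕ) hiδ (i' : ℕ) hi'ν
    -- unit identity
    have huid : ∀ j : ℕ, ((μ ^ j : Kˣ) ^ f) * ((μ ^ j : Kˣ) ^ m) ^ (i : ℕ)
        * (μ ^ j : Kˣ) ^ (i' : ℕ) = (μ ^ (f + (i : ℤ) * m + ((i' : ℕ) : ℤ))) ^ j := by
      intro j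
      simp only [← zpow_natCast, ← zpow_mul, ← zpow_add]
      congr 1
      push_cast
      ring
    set G : ℕ → K := fun j => b j * ((μ ^ (f + (i : ℤ) * m + ((i' : ℕ) : ℤ)) : Kˣ) : K) ^ j
      with hG
    have hterm : ∀ j : ↥S, Avec i j * Bvec i' j = G (j : ℕ) := by
      intro j
      simp only [hAvec, hBvec, hG, hy]
      have := congrArg (Units.val) (huid (j : ℕ))
      push_cast at this ⊢
      rw [← this]
      ring
    calc ∑ j : ↥S, Avec i j * Bvec i' j = ∑ j : ↥S, G (j : ℕ) :=
          Finset.sum_congr rfl fun j _ => hterm j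
      _ = ∑ j ∈ S, G j := Finset.sum_coe_sort S G
      _ = ∑ j ∈ Finset.range n', G j := by
          rw [hS]
          refine Finset.sum_filter_of_ne ?_
          intro x _ hGx
          intro hbx
          exact hGx (by simp [hG, hbx])
      _ = 0 := hkey
  have := aux_dim Avec Bvec hA hB horth
  rw [hcards] at this
  omega

end AuxiliaryLemmas

section AuxiliaryLemmas2

lemma aux_hasseDeriv_map {F K : Type*} [CommSemiring F] [CommSemiring K] (φ : F →+* K)
    (u : ℕ) (g : F[X]) : hasseDeriv u (g.map φ) = (hasseDeriv u g).map φ := by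
  ext n
  simp [hasseDeriv_coeff, coeff_map]

lemma aux_mult_dvd {F K : Type*} [Field F] [Field K] [Algebra F K]
    (g : F[X]) (x : K) (N : ℕ)
    (h : ∀ u < N, aeval x (hasseDeriv u g) = 0) :
    (X - C x) ^ N ∣ g.map (algebraMap F K) := by
  set gm := g.map (algebraMap F K) with hgm
  have hc : ∀ u < N, (taylor x gm).coeff u = 0 := by
    intro u hu
    rw [taylor_coeff, hgm, aux_hasseDeriv_map, eval_map, ← aeval_def]
    exact h u hu
  conv_rhs => rw [← sum_taylor_eq gm x]
  rw [Polynomial.sum]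
  apply Finset.dvd_sum
  intro i hi
  have hN : N ≤ i := by
    by_contra hlt
    exact (mem_support_iff.mp hi) (hc i (by omega))
  exact Dvd.dvd.mul_left (pow_dvd_pow _ hN) _

lemma aux_sum_range_mul {M : Type*} [AddCommMonoid M] (a b : ℕ) (fn : ℕ → M) :
    ∑ k ∈ Finset.range (a * b), fn k = ∑ j ∈ Finset.range b, ∑ v ∈ Finset.range a, fn (v + j * a) := by
  induction b with
  | zero => simp
  | succ b ih =>
      rw [Finset.sum_range_succ, ← ih, Nat.mul_succ, Finset.sum_range_add]
      simp [add_comm, mul_comm]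

lemma aux_slice_eq {F K : Type*} [Field F] [Field K] [Algebra F K]
    (p : ℕ) (hp : p.Prime) [CharP K p] (s n' : ℕ)
    (c : F[X]) (hcdeg : c.natDegree < p ^ s * n')
    (x : Kˣ) (hdvd : (X - C ((x : K))) ^ (p ^ s) ∣ c.map (algebraMap F K))
    (u : ℕ) (hu : u < p ^ s) :
    ∑ j ∈ Finset.range n', (algebraMap F K) (c.coeff (u + j * p ^ s)) * ((x : K) ^ p ^ s) ^ j
      = 0 := by
  haveI : Fact p.Prime := ⟨hp⟩
  set φ := algebraMap F K
  set cm := c.map φ with hcm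
  set β : K := (x : K) ^ p ^ s with hβ
  have hps : 0 < p ^ s := pow_pos hp.pos s
  have hpow : (X - C ((x : K))) ^ (p ^ s) = X ^ p ^ s - C β := by
    rw [sub_pow_char_pow, hβ, ← C_pow]
  rw [hpow] at hdvd
  set D : K[X] := ∑ j ∈ Finset.range n', ∑ v ∈ Finset.range (p ^ s),
      C (cm.coeff (v + j * p ^ s)) * C β ^ j * X ^ v with hD
  have hcm_deg : cm.natDegree < p ^ s * n' := lt_of_le_of_lt (natDegree_map_le) hcdeg
  have hsplit : cm = ∑ j ∈ Finset.range n', ∑ v ∈ Finset.range (p ^ s),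
      C (cm.coeff (v + j * p ^ s)) * X ^ (v + j * p ^ s) := by
    conv_lhs => rw [cm.as_sum_range' _ hcm_deg]
    rw [aux_sum_range_mul]
    exact Finset.sum_congr rfl fun j _ => Finset.sum_congr rfl fun v _ =>
      (C_mul_X_pow_eq_monomial).symm
  have hdiff : (X ^ p ^ s - C β : K[X]) ∣ cm - D := by
    rw [hsplit, hD, ← Finset.sum_sub_distrib]
    apply Finset.dvd_sum
    intro j _
    rw [← Finset.sum_sub_distrib]
    apply Finset.dvd_sum
    intro v _
    have : C (cm.coeff (v + j * p ^ s)) * X ^ (v + j * p ^ s)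
        - C (cm.coeff (v + j * p ^ s)) * C β ^ j * X ^ v
        = C (cm.coeff (v + j * p ^ s)) * X ^ v * ((X ^ p ^ s) ^ j - C β ^ j) := by
      rw [pow_add, mul_comm j (p ^ s), pow_mul]
      ring
    rw [this]
    exact Dvd.dvd.mul_left (sub_dvd_pow_sub_pow _ _ j) _
  have hDvdD : (X ^ p ^ s - C β : K[X]) ∣ D := by
    have := dvd_sub hdvd hdiff
    simpa using this
  have hDdeg : D.degree < (X ^ p ^ s - C β : K[X]).degree := by
    rw [degree_X_pow_sub_C hps]
    apply lt_of_le_of_lt (degree_sum_le _ _)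
    rw [Finset.sup_lt_iff (by exact_mod_cast WithBot.bot_lt_coe _)]
    intro j _
    apply lt_of_le_of_lt (degree_sum_le _ _)
    rw [Finset.sup_lt_iff (by exact_mod_cast WithBot.bot_lt_coe _)]
    intro v hv
    have h1 : (C (cm.coeff (v + j * p ^ s)) * C β ^ j * X ^ v).degree ≤ (v : WithBot ℕ) := by
      rw [← C_pow, ← C_mul]
      exact degree_C_mul_X_pow_le v _
    apply lt_of_le_of_lt h1
    exact_mod_cast Finset.mem_range.mp hv
  have hD0 : D = 0 := eq_zero_of_dvd_of_degree_lt hDvdD hDdeg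
  have hcoeff := congrArg (fun q : K[X] => q.coeff u) hD0
  simp only [hD, finset_sum_coeff, ← C_pow, ← C_mul, coeff_C_mul, coeff_X_pow,
    mul_ite, mul_one, mul_zero, Finset.sum_ite_eq (Finset.range (p ^ s)),
    Finset.mem_range, hu, if_true, coeff_zero] at hcoeff
  rw [← hcoeff]
  exact Finset.sum_congr rfl fun j _ => by rw [hcm, coeff_map]

end AuxiliaryLemmas2

/-- The number of length-`ps` blocks (out of `n'` consecutive blocks) in which the two
length-`ps·n'` words represented by the polynomials `c₁` and `c₂` differ. -/
noncomputable def blockDiffCount {F : Type*} [Field F]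
    (ps n' : ℕ) (c₁ c₂ : Polynomial F) : ℕ :=
  Set.ncard {j | j < n' ∧ ∃ u < ps, c₁.coeff (u + j * ps) ≠ c₂.coeff (u + j * ps)}

/-- **Unique decoding of `p^s`-phased burst errors up to Bound II.**
Let `C` be the repeated-root cyclic code of length `n = p^s n'` over `F_q`
(`gcd(n', p) = 1`) with monic generator `g` dividing `X^n - 1`, and suppose `g` has
`γ^{f+im+j}` as a root of multiplicity at least `p^s` for all `i = 0,…,δ-2`,
`j = 0,…,ν`, where `γ` has order `n'`, `m ≠ 0`, `gcd(n', m) = 1`, `δ ≥ 2`, `ν ≥ 0`.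
Then any two distinct codewords differ in at least `δ + ν` of the `n'` consecutive
length-`p^s` blocks, and consequently for every received word `r ∈ F_q^n` there is at
most one codeword within `⌊(δ+ν-1)/2⌋` `p^s`-phased burst errors of `r`. -/
theorem burst_error_unique_decoding
    {F K : Type*} [Field F] [Fintype F] [Field K] [Algebra F K]
    (p t s n' : ℕ) (hp : p.Prime) (hq : Fintype.card F = p ^ t) (ht : 0 < t)
    (hn'p : Nat.Coprime n' p)
    (g : F[X]) (hg_monic : g.Monic) (hg_dvd : g ∣ X ^ (p ^ s * n') - 1)
    (γ : Kˣ) (hγ : orderOf γ = n')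
    (f m : ℤ) (hm : m ≠ 0) (hmn' : Int.gcd (n' : ℤ) m = 1)
    (δ ν : ℕ) (hδ : 2 ≤ δ)
    (hroots : ∀ i < δ - 1, ∀ j ≤ ν, ∀ u < p ^ s,
      aeval ((γ ^ (f + (i : ℤ) * m + (j : ℤ)) : Kˣ) : K) (hasseDeriv u g) = 0) :
    (∀ c₁ c₂ : F[X],
      c₁.degree < ((p ^ s * n' : ℕ) : WithBot ℕ) → g ∣ c₁ →
      c₂.degree < ((p ^ s * n' : ℕ) : WithBot ℕ) → g ∣ c₂ → c₁ ≠ c₂ →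
        δ + ν ≤ blockDiffCount (p ^ s) n' c₁ c₂) ∧
    (∀ r : F[X], r.degree < ((p ^ s * n' : ℕ) : WithBot ℕ) →
      ∀ c₁ c₂ : F[X],
        c₁.degree < ((p ^ s * n' : ℕ) : WithBot ℕ) → g ∣ c₁ →
        c₂.degree < ((p ^ s * n' : ℕ) : WithBot ℕ) → g ∣ c₂ →
        blockDiffCount (p ^ s) n' r c₁ ≤ (δ + ν - 1) / 2 →
        blockDiffCount (p ^ s) n' r c₂ ≤ (δ + ν - 1) / 2 →
        c₁ = c₂) := by
  -- characteristic
  haveI hCharF : CharP F p := by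
    haveI : CharP F (ringChar F) := ringChar.charP F
    have hrc : (ringChar F).Prime := CharP.char_is_prime F (ringChar F)
    obtain ⟨n, hn, hcard⟩ := FiniteField.card F (ringChar F)
    have hdvd : p ∣ ringChar F := by
      have h1 : p ∣ (ringChar F) ^ (n : ℕ) := by
        rw [← hcard, hq]
        exact dvd_pow_self p (by omega)
      exact hp.dvd_of_dvd_pow h1
    have : p = ringChar F := ((Nat.prime_dvd_prime_iff_eq hp hrc).mp hdvd)
    rwa [this]
  haveI hCharK : CharP K p := charP_of_injective_algebraMap (algebraMap F K).injective p
  set φ := algebraMap F K with hφ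
  have hn' : 0 < n' := by
    rcases Nat.eq_zero_or_pos n' with h | h
    · exfalso
      rw [h] at hn'p
      have := hn'p.symm
      simp [Nat.coprime_zero_right] at this
      exact hp.one_lt.ne' this
    · exact h
  -- order of μ
  set μ : Kˣ := γ ^ (p ^ s) with hμdef
  have hordμ : orderOf μ = n' := by
    rw [hμdef]
    rw [Nat.Coprime.orderOf_pow]
    · exact hγ
    · rw [hγ]
      exact (Nat.Coprime.pow_right s hn'p)
  -- key claim: distinct codewords differ in ≥ δ + ν blocks
  have main : ∀ c₁ c₂ : F[X],
      c₁.degree < ((p ^ s * n' : ℕ) : WithBot ℕ) → g ∣ c₁ →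
      c₂.degree < ((p ^ s * n' : ℕ) : WithBot ℕ) → g ∣ c₂ → c₁ ≠ c₂ →
        δ + ν ≤ blockDiffCount (p ^ s) n' c₁ c₂ := by
    intro c₁ c₂ hd₁ hdvd₁ hd₂ hdvd₂ hne
    set c : F[X] := c₁ - c₂ with hc
    have hc0 : c ≠ 0 := sub_ne_zero.mpr hne
    have hcdeg : c.natDegree < p ^ s * n' := by
      rw [natDegree_lt_iff_degree_lt hc0]
      exact lt_of_le_of_lt (degree_sub_le _ _) (max_lt hd₁ hd₂)
    have hgc : g ∣ c := dvd_sub hdvd₁ hdvd₂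
    -- slice equations
    have hslice : ∀ u < p ^ s, ∀ i < δ - 1, ∀ j' ≤ ν,
        ∑ j ∈ Finset.range n',
          φ (c.coeff (u + j * p ^ s)) * ((μ ^ (f + (i : ℤ) * m + (j' : ℤ)) : Kˣ) : K) ^ j
          = 0 := by
      intro u hu i hi j' hj'
      set e : ℤ := f + (i : ℤ) * m + (j' : ℤ) with he
      set x : Kˣ := γ ^ e with hx
      have hdvdg : (X - C ((x : K))) ^ (p ^ s) ∣ g.map φ :=
        aux_mult_dvd g _ _ (hroots i hi j' hj')
      have hdvdc : (X - C ((x : K))) ^ (p ^ s) ∣ c.map φ :=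
        dvd_trans hdvdg (Polynomial.map_dvd φ hgc)
      have := aux_slice_eq p hp s n' c hcdeg x hdvdc u hu
      have hxβ : ((x : K) ^ p ^ s) = ((μ ^ e : Kˣ) : K) := by
        rw [hx, hμdef]
        have : (γ ^ e) ^ (p ^ s) = (γ ^ (p ^ s)) ^ e := by
          rw [← zpow_natCast (γ ^ e) (p ^ s), ← zpow_mul, ← zpow_natCast γ (p ^ s),
            ← zpow_mul, mul_comm]
        rw [← this]
        push_cast
        rfl
      rwa [hxβ] at this
    -- find a nonzero slice
    have hex : ∃ u < p ^ s, ∃ j < n', c.coeff (u + j * p ^ s) ≠ 0 := by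
      have : c.coeff c.natDegree ≠ 0 := by
        have h := leadingCoeff_ne_zero.mpr hc0
        rwa [Polynomial.leadingCoeff] at h
      refine ⟨c.natDegree % p ^ s, Nat.mod_lt _ (pow_pos hp.pos s), c.natDegree / p ^ s, ?_, ?_⟩
      · rw [Nat.div_lt_iff_lt_mul (pow_pos hp.pos s), mul_comm n' (p ^ s)]
        exact hcdeg
      · rw [Nat.mod_add_div' c.natDegree (p ^ s)]
        exact this
    obtain ⟨u, hu, j₀, hj₀, hcoef⟩ := hex
    have hht := ht_core n' hn' μ hordμ f m hmn' δ ν hδ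
      (fun j => φ (c.coeff (u + j * p ^ s)))
      (fun i hi j' hj' => hslice u hu i hi j' hj')
      ⟨j₀, hj₀, by simpa using hcoef⟩
    refine le_trans hht ?_
    apply Set.ncard_le_ncard
    · intro j hj
      obtain ⟨hjn, hcj⟩ := hj
      refine ⟨hjn, u, hu, ?_⟩
      have : c.coeff (u + j * p ^ s) ≠ 0 := by simpa using hcj
      rw [hc, coeff_sub] at this
      exact sub_ne_zero.mp this
    · exact Set.Finite.subset (Set.finite_Iio n') (fun j hj => hj.1)
  refine ⟨main, ?_⟩
  intro r hr c₁ c₂ hd₁ hdvd₁ hd₂ hdvd₂ he₁ he₂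
  by_contra hne
  have h1 := main c₁ c₂ hd₁ hdvd₁ hd₂ hdvd₂ hne
  have htri : blockDiffCount (p ^ s) n' c₁ c₂ ≤
      blockDiffCount (p ^ s) n' r c₁ + blockDiffCount (p ^ s) n' r c₂ := by
    unfold blockDiffCount
    have hsub : {j | j < n' ∧ ∃ u < p ^ s, c₁.coeff (u + j * p ^ s) ≠ c₂.coeff (u + j * p ^ s)}
        ⊆ {j | j < n' ∧ ∃ u < p ^ s, r.coeff (u + j * p ^ s) ≠ c₁.coeff (u + j * p ^ s)}
          ∪ {j | j < n' ∧ ∃ u < p ^ s, r.coeff (u + j * p ^ s) ≠ c₂.coeff (u + j * p ^ s)} := by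
      rintro j ⟨hjn, u, hu, hne'⟩
      by_cases h : r.coeff (u + j * p ^ s) = c₁.coeff (u + j * p ^ s)
      · right
        exact ⟨hjn, u, hu, fun h2 => hne' (h ▸ h2 ▸ rfl)⟩
      · left
        exact ⟨hjn, u, hu, h⟩
    have hfin : ∀ (q : Polynomial F) (q' : Polynomial F),
        {j | j < n' ∧ ∃ u < p ^ s, q.coeff (u + j * p ^ s) ≠ q'.coeff (u + j * p ^ s)}.Finite :=
      fun q q' => Set.Finite.subset (Set.finite_Iio n') (fun j hj => hj.1)
    calc Set.ncard _ ≤ Set.ncard (_ ∪ _) :=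
          Set.ncard_le_ncard hsub ((hfin r c₁).union (hfin r c₂))
      _ ≤ _ + _ := Set.ncard_union_le _ _
  omega
end

section
/- Let α be an element of order n'_a and β an element of order n_b in (extensions of) a finite field K containing both, with gcd(n'_a, n_b) = 1, and let m_a, m_b be integers with gcd(n'_a, m_a) = gcd(n_b, m_b) = 1. Let f_a, f_b be integers and δ ≥ 2. Let Y ⊆ {0,…,n_b−1} be nonempty with values b_l ∈ K for l ∈ Y, let E ⊆ {0,…,n'_a−1}, and for each t ∈ {0,…,p^s−1} let E_t ⊆ E with values e^⟨t⟩_j ∈ K for j ∈ E_t. Define S^⟨t⟩(X) = Σ_{i=0}^{δ−2} ( Σ_{j∈E_t} e^⟨t⟩_j α^{(f_a+i m_a)j} ) · ( Σ_{l∈Y} b_l β^{(f_b+i m_b)l} ) X^i, Λ(X) = Π_{i∈E} Π_{j∈Y} (1 − X α^{i m_a} β^{j m_b}), and Ω^⟨t⟩(X) = Σ_{j∈E_t} e^⟨t⟩_j α^{f_a j} ( Σ_{l∈Y} b_l β^{f_b l} Π_{i∈Y, i≠l} (1 − X α^{j m_a} β^{i m_b}) ) Π_{s'∈E, s'≠j}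 Π_{ι∈Y} (1 − X α^{s' m_a} β^{ι m_b}). Then for every t: deg Λ = |E|·|Y|, deg Ω^⟨t⟩ ≤ |E|·|Y| − 1, and Λ(X)·S^⟨t⟩(X) ≡ Ω^⟨t⟩(X) modulo X^{δ−1}. -/
open Polynomial


theorem geom_helper {R : Type*} [CommRing R] (x : R) (N : ℕ) :
    (1 - x) * ∑ i ∈ Finset.range N, x ^ i = 1 - x ^ N := by
  linear_combination -geom_sum_mul x N

theorem zpow_split {G : Type*} [Group G] (u : G) (f m : ℤ) (j i : ℕ) :
    u ^ ((f + (i : ℤ) * m) * (j : ℤ)) = u ^ (f * (j : ℤ)) * (u ^ ((j : ℤ) * m)) ^ i := by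
  rw [← zpow_natCast (u ^ ((j : ℤ) * m)) i, ← zpow_mul, ← zpow_add]
  congr 1; ring

theorem card_arith (y a : ℕ) (hy : 1 ≤ y) (ha : 1 ≤ a) :
    y - 1 + (a - 1) * y ≤ a * y - 1 := by
  obtain ⟨y', rfl⟩ : ∃ y', y = y' + 1 := ⟨y - 1, by omega⟩
  obtain ⟨a', rfl⟩ : ∃ a', a = a' + 1 := ⟨a - 1, by omega⟩
  have h1 : (a' + 1) * (y' + 1) = (y' + a' * (y' + 1)) + 1 := by ring
  simp [h1]

theorem keyMain {K : Type*} [Field K]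
    (α β : Kˣ) (ma mb fa fb : ℤ) (N : ℕ)
    (Y : Finset ℕ) (b : ℕ → K)
    (E : Finset ℕ) (Ett : Finset ℕ) (hEtt : Ett ⊆ E)
    (et : ℕ → K) :
    (∏ i ∈ E, ∏ j ∈ Y,
        (1 - X * C ((α ^ ((i : ℤ) * ma) * β ^ ((j : ℤ) * mb) : Kˣ) : K))).natDegree
        = E.card * Y.card ∧
    (∑ j ∈ Ett,
        C (et j * ((α ^ (fa * (j : ℤ)) : Kˣ) : K)) *
          (∑ l ∈ Y, C (b l * ((β ^ (fb * (l : ℤ)) : Kˣ) : K)) *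
            ∏ i ∈ Y.erase l,
              (1 - X * C ((α ^ ((j : ℤ) * ma) * β ^ ((i : ℤ) * mb) : Kˣ) : K))) *
          ∏ s' ∈ E.erase j, ∏ ι ∈ Y,
            (1 - X * C ((α ^ ((s' : ℤ) * ma) * β ^ ((ι : ℤ) * mb) : Kˣ) : K))).natDegree
        ≤ E.card * Y.card - 1 ∧
    ∀ i < N,
      ((∏ i ∈ E, ∏ j ∈ Y,
          (1 - X * C ((α ^ ((i : ℤ) * ma) * β ^ ((j : ℤ) * mb) : Kˣ) : K))) *
        (∑ i ∈ Finset.range N,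
          C ((∑ j ∈ Ett, et j * ((α ^ ((fa + (i : ℤ) * ma) * (j : ℤ)) : Kˣ) : K)) *
              (∑ l ∈ Y, b l * ((β ^ ((fb + (i : ℤ) * mb) * (l : ℤ)) : Kˣ) : K))) * X ^ i)).coeff i
      = (∑ j ∈ Ett,
          C (et j * ((α ^ (fa * (j : ℤ)) : Kˣ) : K)) *
            (∑ l ∈ Y, C (b l * ((β ^ (fb * (l : ℤ)) : Kˣ) : K)) *
              ∏ i ∈ Y.erase l,
                (1 - X * C ((α ^ ((j : ℤ) * ma) * β ^ ((i : ℤ) * mb) : Kˣ) : K))) *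
            ∏ s' ∈ E.erase j, ∏ ι ∈ Y,
              (1 - X * C ((α ^ ((s' : ℤ) * ma) * β ^ ((ι : ℤ) * mb) : Kˣ) : K))).coeff i := by
  set γ : ℕ → ℕ → K := fun a c => ((α ^ ((a : ℤ) * ma) * β ^ ((c : ℤ) * mb) : Kˣ) : K) with hγ
  set Fac : ℕ → ℕ → K[X] := fun a c => 1 - X * C (γ a c) with hFac
  set w : ℕ → ℕ → K := fun j l =>
    et j * ((α ^ (fa * (j : ℤ)) : Kˣ) : K) * (b l * ((β ^ (fb * (l : ℤ)) : Kˣ) : K)) with hw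
  set Λ : K[X] := ∏ i ∈ E, ∏ j ∈ Y, Fac i j with hΛ
  set Λjl : ℕ → ℕ → K[X] := fun j l =>
    (∏ i ∈ Y.erase l, Fac j i) * ∏ s' ∈ E.erase j, ∏ ι ∈ Y, Fac s' ι with hΛjl
  set Ω : K[X] := ∑ j ∈ Ett,
      C (et j * ((α ^ (fa * (j : ℤ)) : Kˣ) : K)) *
        (∑ l ∈ Y, C (b l * ((β ^ (fb * (l : ℤ)) : Kˣ) : K)) * ∏ i ∈ Y.erase l, Fac j i) *
        ∏ s' ∈ E.erase j, ∏ ι ∈ Y, Fac s' ι with hΩ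
  set S : K[X] := ∑ i ∈ Finset.range N,
      C ((∑ j ∈ Ett, et j * ((α ^ ((fa + (i : ℤ) * ma) * (j : ℤ)) : Kˣ) : K)) *
          (∑ l ∈ Y, b l * ((β ^ ((fb + (i : ℤ) * mb) * (l : ℤ)) : Kˣ) : K))) * X ^ i with hSdef
  -- basic facts about factors
  have hγne : ∀ a c, γ a c ≠ 0 := fun a c => Units.ne_zero _
  have hFlin : ∀ a c, Fac a c = C (-(γ a c)) * X + C 1 := by
    intro a c; simp only [hFac, map_neg, map_one]; ring
  have hFdeg : ∀ a c, (Fac a c).natDegree = 1 := by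
    intro a c; rw [hFlin a c]; exact natDegree_linear (neg_ne_zero.mpr (hγne a c))
  have hFne : ∀ a c, Fac a c ≠ 0 := by
    intro a c h
    have := hFdeg a c
    rw [h, natDegree_zero] at this
    exact one_ne_zero this.symm
  have hFdegle : ∀ a c, (Fac a c).natDegree ≤ 1 := fun a c => (hFdeg a c).le
  -- degree of Λ
  have hΛdeg : Λ.natDegree = E.card * Y.card := by
    rw [hΛ, natDegree_prod _ _ (fun i _ => Finset.prod_ne_zero_iff.mpr (fun c _ => hFne i c))]
    have : ∀ i ∈ E, (∏ j ∈ Y, Fac i j).natDegree = Y.card := by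
      intro i _
      rw [natDegree_prod _ _ (fun c _ => hFne i c)]
      simp [hFdeg]
    rw [Finset.sum_congr rfl this]
    simp [mul_comm]
  -- Ω in structured form
  have hΩeq : Ω = ∑ j ∈ Ett, ∑ l ∈ Y, C (w j l) * Λjl j l := by
    rw [hΩ]
    refine Finset.sum_congr rfl fun j _ => ?_
    rw [Finset.mul_sum, Finset.sum_mul]
    refine Finset.sum_congr rfl fun l _ => ?_
    simp only [hw, hΛjl, map_mul]
    ring
  -- degree of Ω
  have hΩdeg : Ω.natDegree ≤ E.card * Y.card - 1 := by
    rw [hΩeq]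
    refine natDegree_sum_le_of_forall_le _ _ fun j hj => ?_
    refine natDegree_sum_le_of_forall_le _ _ fun l hl => ?_
    have hjE : j ∈ E := hEtt hj
    have hdeg : (Λjl j l).natDegree ≤ (Y.card - 1) + (E.card - 1) * Y.card := by
      refine (natDegree_mul_le).trans (add_le_add ?_ ?_)
      · refine (natDegree_prod_le _ _).trans ?_
        calc ∑ i ∈ Y.erase l, (Fac j i).natDegree ≤ ∑ i ∈ Y.erase l, 1 :=
              Finset.sum_le_sum fun i _ => hFdegle j i
          _ = Y.card - 1 := by rw [Finset.sum_const, smul_eq_mul, mul_one,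
              Finset.card_erase_of_mem hl]
      · refine (natDegree_prod_le _ _).trans ?_
        calc ∑ s' ∈ E.erase j, (∏ ι ∈ Y, Fac s' ι).natDegree
            ≤ ∑ s' ∈ E.erase j, Y.card := by
              refine Finset.sum_le_sum fun s' _ => (natDegree_prod_le _ _).trans ?_
              calc ∑ ι ∈ Y, (Fac s' ι).natDegree ≤ ∑ ι ∈ Y, 1 :=
                    Finset.sum_le_sum fun ι _ => hFdegle s' ι
                _ = Y.card := by simp
          _ = (E.card - 1) * Y.card := by
              rw [Finset.sum_const, smul_eq_mul, Finset.card_erase_of_mem hjE]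
    refine (natDegree_mul_le.trans (add_le_add (natDegree_C _).le hdeg)).trans ?_
    have hY1 : 1 ≤ Y.card := Finset.card_pos.mpr ⟨l, hl⟩
    have hE1 : 1 ≤ E.card := Finset.card_pos.mpr ⟨j, hjE⟩
    rw [zero_add]
    exact card_arith Y.card E.card hY1 hE1
  -- factorization of Λ
  have hΛfac : ∀ j ∈ E, ∀ l ∈ Y, Λ = Fac j l * Λjl j l := by
    intro j hj l hl
    rw [hΛ, hΛjl, ← Finset.mul_prod_erase E _ hj, ← Finset.mul_prod_erase Y _ hl]
    ring
  -- S in structured form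
  have hSeq : S = ∑ j ∈ Ett, ∑ l ∈ Y, C (w j l) *
      ∑ i ∈ Finset.range N, (C (γ j l) * X) ^ i := by
    rw [hSdef]
    have key : ∀ i ∈ Finset.range N,
        C ((∑ j ∈ Ett, et j * ((α ^ ((fa + (i : ℤ) * ma) * (j : ℤ)) : Kˣ) : K)) *
          (∑ l ∈ Y, b l * ((β ^ ((fb + (i : ℤ) * mb) * (l : ℤ)) : Kˣ) : K))) * X ^ i
        = ∑ j ∈ Ett, ∑ l ∈ Y, C (w j l) * (C (γ j l) * X) ^ i := by
      intro i _
      rw [map_mul, map_sum, map_sum, Finset.sum_mul_sum, Finset.sum_mul]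
      refine Finset.sum_congr rfl fun j _ => ?_
      rw [Finset.sum_mul]
      refine Finset.sum_congr rfl fun l _ => ?_
      rw [mul_pow, ← map_pow, ← map_mul]
      rw [show C (w j l) * (C (γ j l ^ i) * X ^ i) = C (w j l * γ j l ^ i) * X ^ i from by
        simp only [map_mul]; ring]
      refine congrArg (· * X ^ i) (congrArg C ?_)
      simp only [hw, hγ]
      rw [zpow_split α fa ma j i, zpow_split β fb mb l i]
      simp only [Units.val_mul, Units.val_pow_eq_pow_val]
      ring
    rw [Finset.sum_congr rfl key]
    rw [Finset.sum_comm]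
    refine Finset.sum_congr rfl fun j _ => ?_
    rw [Finset.sum_comm]
    refine Finset.sum_congr rfl fun l _ => ?_
    rw [Finset.mul_sum]
  -- the divisibility
  have hdvd : (X : K[X]) ^ N ∣ Λ * S - Ω := by
    have hLS : Λ * S = ∑ j ∈ Ett, ∑ l ∈ Y,
        C (w j l) * Λjl j l * (1 - (C (γ j l) * X) ^ N) := by
      rw [hSeq, Finset.mul_sum]
      refine Finset.sum_congr rfl fun j hj => ?_
      rw [Finset.mul_sum]
      refine Finset.sum_congr rfl fun l hl => ?_
      rw [hΛfac j (hEtt hj) l hl]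
      have : Fac j l = 1 - C (γ j l) * X := by rw [hFac]; ring
      rw [this]
      calc (1 - C (γ j l) * X) * Λjl j l * (C (w j l) * ∑ i ∈ Finset.range N, (C (γ j l) * X) ^ i)
          = C (w j l) * Λjl j l *
            ((1 - C (γ j l) * X) * ∑ i ∈ Finset.range N, (C (γ j l) * X) ^ i) := by ring
        _ = C (w j l) * Λjl j l * (1 - (C (γ j l) * X) ^ N) := by rw [geom_helper]
    have hsub : Λ * S - Ω = ∑ j ∈ Ett, ∑ l ∈ Y,
        -(C (w j l) * Λjl j l * (C (γ j l) * X) ^ N) := by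
      rw [hLS, hΩeq, ← Finset.sum_sub_distrib]
      refine Finset.sum_congr rfl fun j _ => ?_
      rw [← Finset.sum_sub_distrib]
      refine Finset.sum_congr rfl fun l _ => ?_
      ring
    rw [hsub]
    refine Finset.dvd_sum fun j _ => Finset.dvd_sum fun l _ => dvd_neg.mpr ?_
    have hX : (X : K[X]) ^ N ∣ (C (γ j l) * X) ^ N := by
      rw [mul_pow]; exact Dvd.intro_left _ rfl
    exact hX.mul_left _
  refine ⟨hΛdeg, hΩdeg, fun i hi => ?_⟩
  have := Polynomial.X_pow_dvd_iff.mp hdvd i hi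
  rw [coeff_sub, sub_eq_zero] at this
  exact this

/-- **Key equations for decoding up to Bound III.**  Over a finite field `K` containing
`α` of order `n'_a` and `β` of order `n_b` (coprime orders, `gcd(n'_a, m_a) = 1`,
`gcd(n_b, m_b) = 1`), with `Y ⊆ {0,…,n_b-1}` nonempty (support of a fixed codeword `b`
of the associated code), `E ⊆ {0,…,n'_a-1}` a burst-error support with component
supports `E_t ⊆ E` and error values `e^⟨t⟩_j` for `t ∈ {0,…,p^s-1}`, define the
syndromes `S^⟨t⟩`, the error-locator `Λ` and the error-evaluators `Ω^⟨t⟩`.  Then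
`deg Λ = |E|·|Y|`, `deg Ω^⟨t⟩ ≤ |E|·|Y| - 1` and `Λ · S^⟨t⟩ ≡ Ω^⟨t⟩ (mod X^{δ-1})`
for every `t`. -/
theorem keyEquation_boundIII
    {K : Type*} [Field K] [Fintype K]
    (p s n'a nb : ℕ) (hp : p.Prime)
    (α β : Kˣ) (hα : orderOf α = n'a) (hβ : orderOf β = nb)
    (hcop : Nat.Coprime n'a nb)
    (ma mb : ℤ) (hma : Int.gcd (n'a : ℤ) ma = 1) (hmb : Int.gcd (nb : ℤ) mb = 1)
    (fa fb : ℤ) (δ : ℕ) (hδ : 2 ≤ δ)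
    (Y : Finset ℕ) (hY : Y.Nonempty) (hYsub : ∀ l ∈ Y, l < nb) (b : ℕ → K)
    (E : Finset ℕ) (hEsub : ∀ j ∈ E, j < n'a)
    (Et : ℕ → Finset ℕ) (hEt : ∀ t, Et t ⊆ E)
    (e : ℕ → ℕ → K) :
    ∀ t < p ^ s,
      letI Λ : K[X] := ∏ i ∈ E, ∏ j ∈ Y,
        (1 - X * C ((α ^ ((i : ℤ) * ma) * β ^ ((j : ℤ) * mb) : Kˣ) : K))
      letI S : K[X] := ∑ i ∈ Finset.range (δ - 1),
        C ((∑ j ∈ Et t, e t j * ((α ^ ((fa + (i : ℤ) * ma) * (j : ℤ)) : Kˣ) : K)) *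
            (∑ l ∈ Y, b l * ((β ^ ((fb + (i : ℤ) * mb) * (l : ℤ)) : Kˣ) : K))) * X ^ i
      letI Ω : K[X] := ∑ j ∈ Et t,
        C (e t j * ((α ^ (fa * (j : ℤ)) : Kˣ) : K)) *
          (∑ l ∈ Y, C (b l * ((β ^ (fb * (l : ℤ)) : Kˣ) : K)) *
            ∏ i ∈ Y.erase l,
              (1 - X * C ((α ^ ((j : ℤ) * ma) * β ^ ((i : ℤ) * mb) : Kˣ) : K))) *
          ∏ s' ∈ E.erase j, ∏ ι ∈ Y,
            (1 - X * C ((α ^ ((s' : ℤ) * ma) * β ^ ((ι : ℤ) * mb) : Kˣ) : K))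
      Λ.natDegree = E.card * Y.card ∧ Ω.natDegree ≤ E.card * Y.card - 1 ∧
        ∀ i < δ - 1, (Λ * S).coeff i = Ω.coeff i := by
  intro t _ht
  exact keyMain α β ma mb fa fb (δ - 1) Y b E (Et t) (hEt t) (e t)
end

section
/- Let α be an element of order n'_a and β an element of order n_b in a finite field K, with gcd(n'_a, n_b) = 1, and let m_a, m_b be integers with gcd(n'_a, m_a) = gcd(n_b, m_b) = 1. Let E ⊆ {0,…,n'_a−1}, let Y ⊆ {0,…,n_b−1} be nonempty, and define Λ(X) = Π_{i∈E} Π_{j∈Y} (1 − X α^{i m_a} β^{j m_b}). Fix j_0 ∈ Y and for each i ∈ {0,…,n'_a−1} set γ_i = β^{−j_0 m_b} α^{−i m_a}. Then Λ(γ_i) = 0 if and only if i ∈ E. -/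
open Polynomial Subgroup

/- A unit `γ` annihilates `∏ (1 - X cᵢⱼ)` exactly when it is the inverse of one of the `cᵢⱼ`. For
`γ_i` and `c_{i'j}` the condition `γ_i c_{i'j} = 1` splits into an `α`-part and a `β`-part, each a
power of an element; since the orders of `α` and `β` are coprime both parts are trivial, and the
`α`-part forces `i' ≡ i` modulo `n'_a` because `m_a` is invertible modulo `n'_a`. -/

theorem eval_prod_prod_one_sub_X_mul_C_eq_zero_iff {R ι κ : Type*} [CommRing R] [IsDomain R]
    (s : Finset ι) (t : Finset κ) (c : ι → κ → R) (x : R) :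
    eval x (∏ i ∈ s, ∏ j ∈ t, (1 - X * C (c i j))) = 0 ↔ ∃ i ∈ s, ∃ j ∈ t, x * c i j = 1 := by
  simp only [eval_prod, Finset.prod_eq_zero_iff, eval_sub, eval_one, eval_mul, eval_X, eval_C,
    sub_eq_zero, eq_comm (a := (1 : R))]

theorem eq_one_of_mul_eq_one_of_mem_zpowers {G : Type*} [CommGroup G] {a b u v : G}
    (hab : (orderOf a).Coprime (orderOf b)) (hu : u ∈ zpowers a) (hv : v ∈ zpowers b)
    (huv : u * v = 1) : u = 1 := by
  have hco : (orderOf u).Coprime (orderOf v) :=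
    (hab.coprime_dvd_left (orderOf_dvd_of_mem_zpowers hu)).coprime_dvd_right
      (orderOf_dvd_of_mem_zpowers hv)
  have horder := (Commute.all u v).orderOf_mul_eq_mul_orderOf_of_coprime hco
  rw [huv, orderOf_one, eq_comm, mul_eq_one] at horder
  exact orderOf_eq_one_iff.mp horder.1

theorem eq_of_zpow_natCast_mul_eq {G : Type*} [Group G] {a : G} {m : ℤ}
    (hm : Int.gcd (orderOf a) m = 1) {i j : ℕ} (hi : i < orderOf a) (hj : j < orderOf a)
    (h : a ^ ((i : ℤ) * m) = a ^ ((j : ℤ) * m)) : i = j := by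
  rw [← orderOf_dvd_sub_iff_zpow_eq_zpow, ← sub_mul] at h
  have hdvd : (orderOf a : ℤ) ∣ (i : ℤ) - j :=
    (Int.isCoprime_iff_gcd_eq_one.mpr hm).dvd_of_dvd_mul_right h
  have hsub := Int.eq_zero_of_abs_lt_dvd hdvd (by rw [abs_lt]; omega)
  omega

theorem chienSearch_correct_general
    {K : Type*} [Field K]
    (n'a nb : ℕ) (α β : Kˣ) (hα : orderOf α = n'a) (hβ : orderOf β = nb)
    (hcop : Nat.Coprime n'a nb)
    (ma mb : ℤ) (hma : Int.gcd (n'a : ℤ) ma = 1)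
    (E : Finset ℕ) (hEsub : ∀ i ∈ E, i < n'a)
    (Y : Finset ℕ)
    (j₀ : ℕ) (hj₀ : j₀ ∈ Y) :
    ∀ i < n'a,
      Polynomial.eval ((β ^ (-(j₀ : ℤ) * mb) * α ^ (-(i : ℤ) * ma) : Kˣ) : K)
          (∏ i' ∈ E, ∏ j ∈ Y,
            (1 - X * C ((α ^ ((i' : ℤ) * ma) * β ^ ((j : ℤ) * mb) : Kˣ) : K))) = 0
        ↔ i ∈ E := by
  subst hα hβ
  intro i hi
  rw [eval_prod_prod_one_sub_X_mul_C_eq_zero_iff]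
  constructor
  · rintro ⟨i', hi', j, -, h⟩
    have hprod : α ^ ((i' : ℤ) * ma) * (α ^ ((i : ℤ) * ma))⁻¹ *
        (β ^ ((j : ℤ) * mb) * (β ^ ((j₀ : ℤ) * mb))⁻¹) = 1 := by
      rw [← Units.val_mul, Units.val_eq_one] at h
      rw [← h]
      simp only [neg_mul, zpow_neg]
      ac_rfl
    have hαpart := eq_one_of_mul_eq_one_of_mem_zpowers hcop
      (mul_mem (zpow_mem_zpowers _ _) (inv_mem (zpow_mem_zpowers _ _)))
      (mul_mem (zpow_mem_zpowers _ _) (inv_mem (zpow_mem_zpowers _ _))) hprod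
    rwa [eq_of_zpow_natCast_mul_eq hma (hEsub i' hi') hi (mul_inv_eq_one.mp hαpart)] at hi'
  · intro hiE
    refine ⟨i, hiE, j₀, hj₀, ?_⟩
    rw [← Units.val_mul, Units.val_eq_one]
    group

/-- **Correctness of the Chien-like root search.**  Over a finite field `K` containing
`α` of order `n'_a` and `β` of order `n_b` with `gcd(n'_a, n_b) = 1`,
`gcd(n'_a, m_a) = gcd(n_b, m_b) = 1`, let `Λ(X) = Π_{i∈E} Π_{j∈Y} (1 - X α^{i mₐ} β^{j m_b})`
for `E ⊆ {0,…,n'_a-1}` and a nonempty `Y ⊆ {0,…,n_b-1}`.  Fix `j₀ ∈ Y` and set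
`γ_i = β^{-j₀ m_b} α^{-i mₐ}`.  Then for `0 ≤ i < n'_a`, `Λ(γ_i) = 0` iff `i ∈ E`. -/
theorem chienSearch_correct
    {K : Type*} [Field K] [Fintype K]
    (n'a nb : ℕ) (α β : Kˣ) (hα : orderOf α = n'a) (hβ : orderOf β = nb)
    (hcop : Nat.Coprime n'a nb)
    (ma mb : ℤ) (hma : Int.gcd (n'a : ℤ) ma = 1) (hmb : Int.gcd (nb : ℤ) mb = 1)
    (E : Finset ℕ) (hEsub : ∀ i ∈ E, i < n'a)
    (Y : Finset ℕ) (hY : Y.Nonempty) (hYsub : ∀ j ∈ Y, j < nb)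
    (j₀ : ℕ) (hj₀ : j₀ ∈ Y) :
    ∀ i < n'a,
      Polynomial.eval ((β ^ (-(j₀ : ℤ) * mb) * α ^ (-(i : ℤ) * ma) : Kˣ) : K)
          (∏ i' ∈ E, ∏ j ∈ Y,
            (1 - X * C ((α ^ ((i' : ℤ) * ma) * β ^ ((j : ℤ) * mb) : Kˣ) : K))) = 0
        ↔ i ∈ E :=
  chienSearch_correct_general n'a nb α β hα hβ hcop ma mb hma E hEsub Y j₀ hj₀
end
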